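/- If a finite connected graph G on n vertices is (5, epsilon)-distance-almost-uniform, then G^4 is (2, epsilon)-distance-almost-uniform and has diameter ceil(diam(G)/4). -/

import Mathlib

/-- The `k`-th power of a graph `G`. -/
def SimpleGraph.power {V : Type*} (G : SimpleGraph V) (k : ℕ) : SimpleGraph V where
  Adj u v := u ≠ v ∧ G.dist u v ≤ k
  symm := by
    constructor
    intro u v h
    exact ⟨h.1.symm, by rw [SimpleGraph.dist_comm]; exact h.2⟩
  loopless := by constructor; intro u h; exact h.1 rfl

/-- `A_s(u)`: the number of vertices at distance exactly `s` from `u`. -/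
noncomputable def levelCard {V : Type*} (G : SimpleGraph V) (u : V) (s : ℕ) : ℕ :=
  Set.ncard {w : V | G.dist u w = s}

/-- `G` is `(k, ε)`-distance-almost-uniform: for every vertex `u` there is an `r`
with `max_{0 ≤ i < k} |A_{r+i}(u)| ≥ n (1 - ε)`. -/
def DistanceAlmostUniform {V : Type*} [Fintype V] (G : SimpleGraph V) (k : ℕ)
    (ε : ℝ) : Prop :=
  ∀ u : V, ∃ r : ℕ, ∃ i < k, (Fintype.card V : ℝ) * (1 - ε) ≤ levelCard G u (r + i)

section Aux

variable {V : Type*} {G : SimpleGraph V}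

lemma myLengthDrop : ∀ {u v : V} (p : G.Walk u v) (n : ℕ),
    (p.drop n).length = p.length - n := by
  intro u v p
  induction p with
  | nil => intro n; cases n <;> simp [SimpleGraph.Walk.drop]
  | cons h q ih =>
    intro n
    cases n with
    | zero => simp [SimpleGraph.Walk.drop]
    | succ n => simp [SimpleGraph.Walk.drop, ih n]

lemma myDistGetVert (hG : G.Connected) : ∀ {u v : V} (p : G.Walk u v) (k : ℕ),
    G.dist u (p.getVert k) ≤ k := by
  intro u v p
  induction p with
  | nil => intro k; simp [SimpleGraph.Walk.getVert]
  | cons h q ih =>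
    intro k
    cases k with
    | zero => simp
    | succ k =>
      rw [SimpleGraph.Walk.getVert_cons_succ]
      calc G.dist _ _ ≤ G.dist _ _ + G.dist _ _ := hG.dist_triangle
        _ ≤ 1 + k := by
            exact Nat.add_le_add (le_of_eq (SimpleGraph.dist_eq_one_iff_adj.mpr h)) (ih k)
        _ = k + 1 := by omega

lemma myMono : G ≤ G.power 4 := by
  intro a b hab
  exact ⟨hab.ne, by rw [SimpleGraph.dist_eq_one_iff_adj.mpr hab]; omega⟩

lemma myDistLower (hG : G.Connected) : ∀ {u v : V} (q : (G.power 4).Walk u v),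
    G.dist u v ≤ 4 * q.length := by
  intro u v q
  induction q with
  | nil => simp [SimpleGraph.dist_self]
  | cons h q ih =>
    simp only [SimpleGraph.Walk.length_cons]
    calc G.dist _ _ ≤ G.dist _ _ + G.dist _ _ := hG.dist_triangle
      _ ≤ 4 + 4 * q.length := Nat.add_le_add h.2 ih
      _ = 4 * (q.length + 1) := by ring

lemma myDistUpperAux (hG : G.Connected) : ∀ (n : ℕ) {u v : V} (p : G.Walk u v),
    p.length = n → (G.power 4).dist u v ≤ (n + 3) / 4 := by
  intro n
  induction n using Nat.strong_induction_on with
  | _ n ih =>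
    intro u v p hp
    by_cases huv : u = v
    · subst huv; simp [SimpleGraph.dist_self]
    by_cases h4 : n ≤ 4
    · have hn : 1 ≤ n := by
        rcases Nat.eq_zero_or_pos n with h0 | h1
        · exact absurd (SimpleGraph.Walk.eq_of_length_eq_zero (hp.trans h0)) huv
        · exact h1
      have hadj : (G.power 4).Adj u v := ⟨huv, (SimpleGraph.dist_le p).trans (hp ▸ h4)⟩
      calc (G.power 4).dist u v = 1 := SimpleGraph.dist_eq_one_iff_adj.mpr hadj
        _ ≤ (n + 3) / 4 := by omega
    · push_neg at h4
      set w := p.getVert 4 with hw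
      have h1 : (G.power 4).dist u w ≤ 1 := by
        by_cases huw : u = w
        · rw [← huw, SimpleGraph.dist_self]; omega
        · exact le_of_eq (SimpleGraph.dist_eq_one_iff_adj.mpr ⟨huw, myDistGetVert hG p 4⟩)
      have h2 : (G.power 4).dist w v ≤ (n - 4 + 3) / 4 :=
        ih (n - 4) (by omega) (p.drop 4) (by rw [myLengthDrop, hp])
      have hconn4 : (G.power 4).Connected := hG.mono myMono
      calc (G.power 4).dist u v ≤ _ + _ := hconn4.dist_triangle
        _ ≤ 1 + (n - 4 + 3) / 4 := Nat.add_le_add h1 h2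
        _ = (n + 3) / 4 := by omega

lemma myDistPower (hG : G.Connected) (u v : V) :
    (G.power 4).dist u v = (G.dist u v + 3) / 4 := by
  apply Nat.le_antisymm
  · obtain ⟨p, hp⟩ := hG.exists_walk_length_eq_dist u v
    exact myDistUpperAux hG _ p hp
  · have hconn4 : (G.power 4).Connected := hG.mono myMono
    obtain ⟨q, hq⟩ := hconn4.exists_walk_length_eq_dist u v
    have := myDistLower hG q
    rw [hq] at this
    omega

lemma myEdiamNeTop [Fintype V] (hG : G.Connected) : G.ediam ≠ ⊤ := by
  have : Nonempty V := hG.nonempty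
  obtain ⟨u, v, huv⟩ := SimpleGraph.exists_edist_eq_ediam_of_finite (G := G)
  rw [← huv]
  exact SimpleGraph.edist_ne_top_iff_reachable.mpr (hG u v)

end Aux

/-- If a finite connected graph `G` is `(5, ε)`-distance-almost-uniform then `G^4`
is `(2, ε)`-distance-almost-uniform and has diameter `⌈diam(G)/4⌉`. -/
theorem power_four_distance_almost_uniform {V : Type*} [Fintype V]
    (G : SimpleGraph V) (hG : G.Connected) (ε : ℝ)
    (h : DistanceAlmostUniform G 5 ε) :
    DistanceAlmostUniform (G.power 4) 2 ε ∧
      (G.power 4).diam = (G.diam + 3) / 4 := by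
  have : Nonempty V := hG.nonempty
  have hconn4 : (G.power 4).Connected := hG.mono myMono
  constructor
  · intro u
    obtain ⟨r, i, hi, hcard⟩ := h u
    refine ⟨(r + i + 3) / 4, 0, by norm_num, ?_⟩
    refine hcard.trans ?_
    have hsub : {w : V | G.dist u w = r + i} ⊆
        {w : V | (G.power 4).dist u w = (r + i + 3) / 4 + 0} := by
      intro w hw
      simp only [Set.mem_setOf_eq] at hw ⊢
      rw [myDistPower hG, hw]; omega
    exact_mod_cast Nat.cast_le.mpr (Set.ncard_le_ncard hsub (Set.toFinite _))
  · apply Nat.le_antisymm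
    · obtain ⟨u, v, huv⟩ := SimpleGraph.exists_dist_eq_diam (G := G.power 4)
      rw [← huv, myDistPower hG]
      have := SimpleGraph.dist_le_diam (G := G) (myEdiamNeTop hG) (u := u) (v := v)
      omega
    · obtain ⟨u, v, huv⟩ := SimpleGraph.exists_dist_eq_diam (G := G)
      rw [← huv, ← myDistPower hG]
      exact SimpleGraph.dist_le_diam (myEdiamNeTop hconn4)
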